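/- In subStraTT, typing judgements are cumulative: if a term a has type A at level j under signature Δ and context Γ (i.e., Δ; Γ ⊢ a :^j A), and j ≤ k, then Δ; Γ ⊢ a :^k A. -/
import Mathlib


/-! Syntax of subStraTT: a single universe ⋆, variables, displaced constants,
stratified dependent function types, abstractions, applications, the empty type
and its eliminator. Levels are natural numbers. -/

inductive Tm : Type
  | star
  | var (x : ℕ)
  | const (x : ℕ) (i : ℕ)
  | pi (j : ℕ) (x : ℕ) (A B : Tm)
  | lam (x : ℕ) (b : Tm)
  | app (b a : Tm)
  | bot
  | absurd (b : Tm)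
  deriving DecidableEq

namespace Tm

/-- Substitution `a{u/x}` of the term `u` for the variable `x`. -/
def subst (x : ℕ) (u : Tm) : Tm → Tm
  | star => star
  | var y => if y = x then u else var y
  | const y i => const y i
  | pi j y A B => pi j y (subst x u A) (if y = x then B else subst x u B)
  | lam y b => lam y (if y = x then b else subst x u b)
  | app b a => app (subst x u b) (subst x u a)
  | bot => bot
  | absurd b => absurd (subst x u b)

/-- Displacement `a^{+i}`: uniformly increment every level annotation by `i`. -/
def incr (i : ℕ) : Tm → Tm
  | star => star
  | var y => var y
  | const y j => const y (i + j)
  | pi j y A B => pi (i + j) y (incr i A) (incr i B)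
  | lam y b => lam y (incr i b)
  | app b a => app (incr i b) (incr i a)
  | bot => bot
  | absurd b => absurd (incr i b)

end Tm

/-- A signature entry `x :^k A := a` (name, level, type, definition). -/
abbrev Sig := List (ℕ × ℕ × Tm × Tm)
/-- A context entry `x :^k A` (name, level, type); head is the most recent. -/
abbrev Ctx := List (ℕ × ℕ × Tm)

def lookupSig : Sig → ℕ → Option (ℕ × Tm × Tm)
  | [], _ => none
  | (y, k, A, a) :: Δ, x => if x = y then some (k, A, a) else lookupSig Δ x

def lookupCtx : Ctx → ℕ → Option (ℕ × Tm)
  | [], _ => none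
  | (y, k, A) :: Γ, x => if x = y then some (k, A) else lookupCtx Γ x

/-- Untyped definitional equality `Δ ⊢ a ≡ b`. -/
inductive DEq (Δ : Sig) : Tm → Tm → Prop
  | refl (a) : DEq Δ a a
  | sym : DEq Δ a b → DEq Δ b a
  | trans : DEq Δ a b → DEq Δ b c → DEq Δ a c
  | beta (x b a) : DEq Δ (.app (.lam x b) a) (b.subst x a)
  | delta {x i k A a} : lookupSig Δ x = some (k, A, a) → DEq Δ (.const x i) (a.incr i)
  | pi {j x A A' B B'} : DEq Δ A A' → DEq Δ B B' → DEq Δ (.pi j x A B) (.pi j x A' B')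
  | lam {x b b'} : DEq Δ b b' → DEq Δ (.lam x b) (.lam x b')
  | app {b b' a a'} : DEq Δ b b' → DEq Δ a a' → DEq Δ (.app b a) (.app b' a')
  | absurd {b b'} : DEq Δ b b' → DEq Δ (.absurd b) (.absurd b')

mutual
  /-- Well-formed signatures `⊢ Δ`. -/
  inductive SigWf : Sig → Prop
    | nil : SigWf []
    | cons {Δ x k A a} : SigWf Δ → lookupSig Δ x = none →
        Typing Δ [] a k A → SigWf ((x, k, A, a) :: Δ)

  /-- Well-formed contexts `Δ ⊢ Γ`. -/
  inductive CtxWf : Sig → Ctx → Prop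
    | nil {Δ} : SigWf Δ → CtxWf Δ []
    | cons {Δ Γ x k A} : CtxWf Δ Γ → lookupCtx Γ x = none →
        Typing Δ Γ A k .star → CtxWf Δ ((x, k, A) :: Γ)

  /-- Level-annotated typing `Δ; Γ ⊢ a :^k A` of subStraTT. -/
  inductive Typing : Sig → Ctx → Tm → ℕ → Tm → Prop
    | star {Δ Γ k} : CtxWf Δ Γ → Typing Δ Γ .star k .star
    | var {Δ Γ x j k A} : CtxWf Δ Γ → lookupCtx Γ x = some (j, A) → j ≤ k →
        Typing Δ Γ (.var x) k A
    | const {Δ Γ x i j k A a} : CtxWf Δ Γ → lookupSig Δ x = some (j, A, a) →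
        i + j ≤ k → Typing Δ Γ (.const x i) k (A.incr i)
    | pi {Δ Γ j k x A B} : j < k → Typing Δ Γ A j .star →
        Typing Δ ((x, j, A) :: Γ) B k .star → Typing Δ Γ (.pi j x A B) k .star
    | lam {Δ Γ j k x A B b} : j < k → Typing Δ Γ A j .star →
        Typing Δ ((x, j, A) :: Γ) b k B → Typing Δ Γ (.lam x b) k (.pi j x A B)
    | app {Δ Γ j k x A B b a} : Typing Δ Γ b k (.pi j x A B) → Typing Δ Γ a j A →
        Typing Δ Γ (.app b a) k (B.subst x a)
    | bot {Δ Γ k} : CtxWf Δ Γ → Typing Δ Γ .bot k .star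
    | absurd {Δ Γ k b A} : Typing Δ Γ b k .bot → Typing Δ Γ A k .star →
        Typing Δ Γ (.absurd b) k A
    | conv {Δ Γ k a A B} : Typing Δ Γ a k A → DEq Δ A B →
        Typing Δ Γ B k .star → Typing Δ Γ a k B
end

private lemma cumul_aux : ∀ {Δ : Sig} {Γ : Ctx} {a : Tm} {j : ℕ} {A : Tm},
    Typing Δ Γ a j A → ∀ k, j ≤ k → Typing Δ Γ a k A := by
  refine @Typing.rec (fun _ _ => True) (fun _ _ _ => True)
    (fun Δ Γ a j A _ => ∀ k, j ≤ k → Typing Δ Γ a k A)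
    trivial (fun _ _ _ _ _ => trivial) (fun _ _ => trivial) (fun _ _ _ _ _ => trivial)
    ?_ ?_ ?_ ?_ ?_ ?_ ?_ ?_ ?_
  · intro _ _ _ hw _ k _; exact .star hw
  · intro _ _ _ _ _ _ hw hl hle _ k hk; exact .var hw hl (hle.trans hk)
  · intro _ _ _ _ _ _ _ _ hw hl hle _ k hk; exact .const hw hl (hle.trans hk)
  · intro _ _ _ _ _ _ _ hlt hA hB _ ihB k hk; exact .pi (lt_of_lt_of_le hlt hk) hA (ihB k hk)
  · intro _ _ _ _ _ _ _ _ hlt hA hb _ ihb k hk; exact .lam (lt_of_lt_of_le hlt hk) hA (ihb k hk)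
  · intro _ _ _ _ _ _ _ _ _ hb ha ihb _ k hk; exact .app (ihb k hk) ha
  · intro _ _ _ hw _ k _; exact .bot hw
  · intro _ _ _ _ _ hb hA ihb ihA k hk; exact .absurd (ihb k hk) (ihA k hk)
  · intro _ _ _ _ _ _ ha hdq hB iha ihB k hk; exact .conv (iha k hk) hdq (ihB k hk)

/-- **Cumulativity (subStraTT)**: if `Δ; Γ ⊢ a :^j A` and `j ≤ k` then `Δ; Γ ⊢ a :^k A`. -/
theorem substratt_cumulativity {Δ : Sig} {Γ : Ctx} {a A : Tm} {j k : ℕ}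
    (h : Typing Δ Γ a j A) (hjk : j ≤ k) : Typing Δ Γ a k A := by
  exact cumul_aux h k hjk
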